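/- Let f and g be functions of class C¹ mapping (0,1] into (0,1], with f(1) = g(1) = 1, with f, g and g' non-decreasing on (0,1], and suppose x ↦ x·f'(x) is non-decreasing on (0,1]. Then x ↦ x·(g∘f)'(x) is non-decreasing on (0,1], and hence g∘f is an l-Weierstrass function on (0,1]: (g∘f)(x·y) ≥ (g∘f)(x) + (g∘f)(y) - 1 for all x, y ∈ (0,1]. If additionally f and g are submultiplicative on (0,1], then g∘f is a Weierstrass function on (0,1]: (g∘f)(x) + (g∘f)(y) - 1 ≤ (g∘f)(x·y) ≤ (g∘f)(x)·(g∘f)(y) for all x, y ∈ (0,1]. -/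

import Mathlib

/-!
With `h = g ∘ f`, the function `x * h' x = g' (f x) * (x * f' x)` is a product of two
nonnegative non-decreasing functions, hence non-decreasing. For fixed `y ∈ (0,1]` the
derivative of `t ↦ h (t * y) - h t` is `((t * y) * h' (t * y) - t * h' t) / t ≤ 0`, so this
function is antitone and its value at `x` dominates its value at `1`, which is
`h x + h y ≤ h (x * y) + h 1`. Submultiplicativity passes to `g ∘ f` because `g` is monotone.
-/

open Set

lemma mul_mem_Ioc_zero_one {x y : ℝ} (hx : x ∈ Ioc (0:ℝ) 1) (hy : y ∈ Ioc (0:ℝ) 1) :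
    x * y ∈ Ioc (0:ℝ) 1 :=
  ⟨mul_pos hx.1 hy.1, mul_le_one₀ hx.2 hy.1.le hy.2⟩

lemma nonneg_of_hasDerivWithinAt_of_monotoneOn {D : Set ℝ} (hD : Convex ℝ D)
    (hD' : (interior D).Nonempty) {f : ℝ → ℝ} {f' x : ℝ} (hx : x ∈ D)
    (hderiv : HasDerivWithinAt f f' D x) (hmono : MonotoneOn f D) : 0 ≤ f' :=
  hderiv.derivWithin (uniqueDiffOn_convex hD hD' x hx) ▸ hmono.derivWithin_nonneg

lemma monotoneOn_mul_deriv_comp {f f' g g' : ℝ → ℝ}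
    (hfderiv : ∀ x ∈ Ioc (0:ℝ) 1, HasDerivWithinAt f (f' x) (Ioc 0 1) x)
    (hgderiv : ∀ x ∈ Ioc (0:ℝ) 1, HasDerivWithinAt g (g' x) (Ioc 0 1) x)
    (hf_maps : MapsTo f (Ioc 0 1) (Ioc 0 1))
    (hfmono : MonotoneOn f (Ioc 0 1)) (hgmono : MonotoneOn g (Ioc 0 1))
    (hg'mono : MonotoneOn g' (Ioc 0 1)) (hH : MonotoneOn (fun x => x * f' x) (Ioc 0 1)) :
    MonotoneOn (fun x => x * (g' (f x) * f' x)) (Ioc 0 1) := by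
  have hIoc : (interior (Ioc (0:ℝ) 1)).Nonempty := by simp
  have hf'_nonneg : ∀ x ∈ Ioc (0:ℝ) 1, 0 ≤ f' x := fun x hx =>
    nonneg_of_hasDerivWithinAt_of_monotoneOn (convex_Ioc 0 1) hIoc hx (hfderiv x hx) hfmono
  have hg'_nonneg : ∀ x ∈ Ioc (0:ℝ) 1, 0 ≤ g' x := fun x hx =>
    nonneg_of_hasDerivWithinAt_of_monotoneOn (convex_Ioc 0 1) hIoc hx (hgderiv x hx) hgmono
  have hprod := (hg'mono.comp hfmono hf_maps).mul hH (fun x hx => hg'_nonneg _ (hf_maps hx))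
    fun x hx => mul_nonneg hx.1.le (hf'_nonneg x hx)
  convert hprod using 2 with x
  simp only [Pi.mul_apply, Function.comp_apply]
  ring

section MulDerivMonotone

variable {h h' : ℝ → ℝ} (hderiv : ∀ x ∈ Ioc (0:ℝ) 1, HasDerivWithinAt h (h' x) (Ioc 0 1) x)
  (hmono : MonotoneOn (fun x => x * h' x) (Ioc 0 1))

include hderiv hmono

lemma antitoneOn_comp_mul_sub {y : ℝ} (hy : y ∈ Ioc (0:ℝ) 1) :
    AntitoneOn (fun t => h (t * y) - h t) (Ioc 0 1) := by
  have hmaps : MapsTo (· * y) (Ioc (0:ℝ) 1) (Ioc 0 1) := fun t ht => mul_mem_Ioc_zero_one ht hy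
  have hφ : ∀ t ∈ Ioc (0:ℝ) 1, HasDerivWithinAt (fun t => h (t * y) - h t)
      (h' (t * y) * y - h' t) (Ioc 0 1) t := fun t ht =>
    ((hderiv _ (hmaps ht)).comp t ((hasDerivAt_mul_const y).hasDerivWithinAt) hmaps).sub
      (hderiv t ht)
  refine antitoneOn_of_hasDerivWithinAt_nonpos (f' := fun t => h' (t * y) * y - h' t)
    (convex_Ioc 0 1) (fun t ht => (hφ t ht).continuousWithinAt) (fun t ht => ?_) fun t ht => ?_
  · exact (hφ t (interior_subset ht)).mono interior_subset
  · have ht : t ∈ Ioc (0:ℝ) 1 := interior_subset ht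
    have hmul : t * y * h' (t * y) ≤ t * h' t :=
      hmono (hmaps ht) ht (mul_le_of_le_one_right ht.1.le hy.2)
    have : t * (h' (t * y) * y - h' t) ≤ 0 := by linarith
    exact nonpos_of_mul_nonpos_right this ht.1

lemma apply_add_apply_le_apply_mul_add_apply_one {x y : ℝ} (hx : x ∈ Ioc (0:ℝ) 1)
    (hy : y ∈ Ioc (0:ℝ) 1) : h x + h y ≤ h (x * y) + h 1 := by
  have := antitoneOn_comp_mul_sub hderiv hmono hy hx (right_mem_Ioc.2 zero_lt_one) hx.2
  simp only [one_mul] at this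
  linarith

end MulDerivMonotone

lemma comp_apply_mul_le {α : Type*} [Mul α] [Preorder α] {s : Set α} {f g : α → α}
    (hs : ∀ x ∈ s, ∀ y ∈ s, x * y ∈ s) (hf_maps : MapsTo f s s) (hgmono : MonotoneOn g s)
    (hfsub : ∀ x ∈ s, ∀ y ∈ s, f (x * y) ≤ f x * f y)
    (hgsub : ∀ x ∈ s, ∀ y ∈ s, g (x * y) ≤ g x * g y) {x y : α} (hx : x ∈ s) (hy : y ∈ s) :
    g (f (x * y)) ≤ g (f x) * g (f y) :=
  calc g (f (x * y)) ≤ g (f x * f y) :=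
        hgmono (hf_maps (hs x hx y hy)) (hs _ (hf_maps hx) _ (hf_maps hy)) (hfsub x hx y hy)
    _ ≤ g (f x) * g (f y) := hgsub _ (hf_maps hx) _ (hf_maps hy)

theorem weierstrass_of_composition_general (f f' g g' : ℝ → ℝ)
    (hfderiv : ∀ x ∈ Set.Ioc (0:ℝ) 1, HasDerivWithinAt f (f' x) (Set.Ioc 0 1) x)
    (hgderiv : ∀ x ∈ Set.Ioc (0:ℝ) 1, HasDerivWithinAt g (g' x) (Set.Ioc 0 1) x)
    (hf_maps : Set.MapsTo f (Set.Ioc 0 1) (Set.Ioc 0 1))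
    (hf1 : f 1 = 1) (hg1 : g 1 = 1)
    (hfmono : MonotoneOn f (Set.Ioc 0 1))
    (hgmono : MonotoneOn g (Set.Ioc 0 1))
    (hg'mono : MonotoneOn g' (Set.Ioc 0 1))
    (hH : MonotoneOn (fun x => x * f' x) (Set.Ioc 0 1)) :
    MonotoneOn (fun x => x * (g' (f x) * f' x)) (Set.Ioc 0 1) ∧
      (∀ x ∈ Set.Ioc (0:ℝ) 1, ∀ y ∈ Set.Ioc (0:ℝ) 1,
        g (f x) + g (f y) - 1 ≤ g (f (x * y))) ∧
      ((∀ x ∈ Set.Ioc (0:ℝ) 1, ∀ y ∈ Set.Ioc (0:ℝ) 1, f (x * y) ≤ f x * f y) →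
       (∀ x ∈ Set.Ioc (0:ℝ) 1, ∀ y ∈ Set.Ioc (0:ℝ) 1, g (x * y) ≤ g x * g y) →
        ∀ x ∈ Set.Ioc (0:ℝ) 1, ∀ y ∈ Set.Ioc (0:ℝ) 1,
          g (f x) + g (f y) - 1 ≤ g (f (x * y)) ∧ g (f (x * y)) ≤ g (f x) * g (f y)) := by
  have hmono := monotoneOn_mul_deriv_comp hfderiv hgderiv hf_maps hfmono hgmono hg'mono hH
  have hderiv : ∀ x ∈ Ioc (0:ℝ) 1,
      HasDerivWithinAt (g ∘ f) (g' (f x) * f' x) (Ioc 0 1) x := fun x hx =>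
    (hgderiv (f x) (hf_maps hx)).comp x (hfderiv x hx) hf_maps
  have hlW : ∀ x ∈ Ioc (0:ℝ) 1, ∀ y ∈ Ioc (0:ℝ) 1, g (f x) + g (f y) - 1 ≤ g (f (x * y)) := by
    intro x hx y hy
    have := apply_add_apply_le_apply_mul_add_apply_one hderiv hmono hx hy
    simp only [Function.comp_apply, hf1, hg1] at this
    linarith
  refine ⟨hmono, hlW, fun hfsub hgsub x hx y hy => ⟨hlW x hx y hy, ?_⟩⟩
  exact comp_apply_mul_le (fun _ ha _ hb => mul_mem_Ioc_zero_one ha hb) hf_maps hgmono hfsub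
    hgsub hx hy

/-- Let `f, g` be `C¹` functions mapping `(0,1]` into `(0,1]` with `f 1 = g 1 = 1`,
with `f`, `g` and `g'` non-decreasing on `(0,1]`, and with `x ↦ x * f' x` non-decreasing
on `(0,1]`. Then `x ↦ x * (g ∘ f)' x` (i.e. `x ↦ x * (g' (f x) * f' x)`) is non-decreasing
on `(0,1]`, so `g ∘ f` is an l-Weierstrass function on `(0,1]`; and if moreover `f` and `g`
are submultiplicative on `(0,1]`, then `g ∘ f` is a Weierstrass function on `(0,1]`. -/
theorem weierstrass_of_composition (f f' g g' : ℝ → ℝ)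
    (hfderiv : ∀ x ∈ Set.Ioc (0:ℝ) 1, HasDerivWithinAt f (f' x) (Set.Ioc 0 1) x)
    (hgderiv : ∀ x ∈ Set.Ioc (0:ℝ) 1, HasDerivWithinAt g (g' x) (Set.Ioc 0 1) x)
    (hfcont : ContinuousOn f' (Set.Ioc 0 1))
    (hgcont : ContinuousOn g' (Set.Ioc 0 1))
    (hf_maps : Set.MapsTo f (Set.Ioc 0 1) (Set.Ioc 0 1))
    (hg_maps : Set.MapsTo g (Set.Ioc 0 1) (Set.Ioc 0 1))
    (hf1 : f 1 = 1) (hg1 : g 1 = 1)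
    (hfmono : MonotoneOn f (Set.Ioc 0 1))
    (hgmono : MonotoneOn g (Set.Ioc 0 1))
    (hg'mono : MonotoneOn g' (Set.Ioc 0 1))
    (hH : MonotoneOn (fun x => x * f' x) (Set.Ioc 0 1)) :
    MonotoneOn (fun x => x * (g' (f x) * f' x)) (Set.Ioc 0 1) ∧
      (∀ x ∈ Set.Ioc (0:ℝ) 1, ∀ y ∈ Set.Ioc (0:ℝ) 1,
        g (f x) + g (f y) - 1 ≤ g (f (x * y))) ∧
      ((∀ x ∈ Set.Ioc (0:ℝ) 1, ∀ y ∈ Set.Ioc (0:ℝ) 1, f (x * y) ≤ f x * f y) →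
       (∀ x ∈ Set.Ioc (0:ℝ) 1, ∀ y ∈ Set.Ioc (0:ℝ) 1, g (x * y) ≤ g x * g y) →
        ∀ x ∈ Set.Ioc (0:ℝ) 1, ∀ y ∈ Set.Ioc (0:ℝ) 1,
          g (f x) + g (f y) - 1 ≤ g (f (x * y)) ∧ g (f (x * y)) ≤ g (f x) * g (f y)) :=
  weierstrass_of_composition_general f f' g g' hfderiv hgderiv hf_maps hf1 hg1 hfmono hgmono hg'mono
    hH
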